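/- Let E ⊂ ℝ^d be compact and convex, let K = {k_1,…,k_N} ⊂ E, let ℓ : E → E be Lipschitz in the ℓ¹ norm with constant ‖ℓ‖_Lip, set v_i = ℓ(k_i), and let a : E × E → ℝ be a similarity function such that G(x,y) = exp(a(x,y)) satisfies G(x,y) ≥ ε(G) > 0 and ‖G‖_{Lip,∞} := sup_{y∈E} ‖G(·,y)‖_Lip < ∞. Define Attention(q,K,V) = Σ_{j=1}^N [exp(a(q,k_j)) / Σ_{p=1}^N exp(a(q,k_p))] · v_j. Then for all q_1, q_2 ∈ E: ‖Attention(q_1,K,V) − Attention(q_2,K,V)‖₂ ≤ d^{3/2} · ‖ℓ‖_Lip · (2‖G‖_{Lip,∞} diam(E) / ε(G)) · ‖q_1 − q_2‖₂. -/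

import Mathlib

/-!
Each exponential `G(q, k_j)` moves by at most `‖G‖_{Lip,∞} ‖q₁ - q₂‖₁` while the normaliser
`∑ₚ G(q₁, k_p)` is at least `N ε`, so the softmax weights move by at most
`2 ‖G‖_{Lip,∞} ‖q₁ - q₂‖₁ / ε` in ℓ¹. As both weight vectors sum to one, the difference of the
attentions is `∑ⱼ (w_j - w'_j) (ℓ(k_j) - ℓ(q₁))`, and `‖ℓ(k_j) - ℓ(q₁)‖₁ ≤ ‖ℓ‖_Lip diam E`.
Comparing the ℓ¹ and Euclidean norms on `ℝ^d` costs a factor `√d ≤ d^{3/2}`.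
-/

open MeasureTheory Filter
open scoped NNReal ENNReal

noncomputable section

/-- ℓ¹ distance on `ℝ^d`. -/
def l1dist {d : ℕ} (x y : Fin d → ℝ) : ℝ := ∑ i, |x i - y i|

/-- The set of couplings of two measures. -/
def couplings {α : Type*} [MeasurableSpace α] (μ ν : Measure α) : Set (Measure (α × α)) :=
  {π | IsProbabilityMeasure π ∧ π.map Prod.fst = μ ∧ π.map Prod.snd = ν}

/-- Optimal transport cost with ground cost `c`. -/
def Wcost {α : Type*} [MeasurableSpace α] (c : α → α → ℝ) (μ ν : Measure α) : ℝ :=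
  sInf ((fun π : Measure (α × α) => ∫ p, c p.1 p.2 ∂π) '' couplings μ ν)

/-- 1-Wasserstein distance on `ℝ^d` with ℓ¹ ground cost. -/
def W1 {d : ℕ} (μ ν : Measure (Fin d → ℝ)) : ℝ := Wcost l1dist μ ν

/-- Boltzmann–Gibbs transformation `Ψ_g(ν)(dx) = g(x) ν(dx) / ν(g)`. -/
def BG {d : ℕ} (g : (Fin d → ℝ) → ℝ) (ν : Measure (Fin d → ℝ)) : Measure (Fin d → ℝ) :=
  ν.withDensity (fun x => ENNReal.ofReal (g x / ∫ y, g y ∂ν))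

/-- Real-valued Kullback–Leibler divergence `∫ log(dμ/dν) dμ`
(the generalized entropy of the paper is `H_ν(μ) = -KL μ ν`). -/
def KL {α : Type*} [MeasurableSpace α] (μ ν : Measure α) : ℝ :=
  ∫ x, Real.log ((μ.rnDeriv ν x).toReal) ∂μ

/-- Convolution of two measures on `ℝ^d`. -/
def mconv {d : ℕ} (μ ν : Measure (Fin d → ℝ)) : Measure (Fin d → ℝ) :=
  (μ.prod ν).map (fun p => p.1 + p.2)

/-- Empirical measure of a finite family of points. -/
def empMeasure {d N : ℕ} (x : Fin N → (Fin d → ℝ)) : Measure (Fin d → ℝ) :=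
  (N : ℝ≥0∞)⁻¹ • ∑ i, Measure.dirac (x i)

/-- Euclidean (ℓ²) distance on `ℝ^d`. -/
def eudist {d : ℕ} (x y : Fin d → ℝ) : ℝ := Real.sqrt (∑ i, (x i - y i) ^ 2)

lemma l1dist_nonneg {d : ℕ} (x y : Fin d → ℝ) : 0 ≤ l1dist x y :=
  Finset.sum_nonneg fun _ _ => abs_nonneg _

lemma l1dist_self {d : ℕ} (x : Fin d → ℝ) : l1dist x x = 0 := by
  simp [l1dist]

lemma l1dist_pos_of_ne {d : ℕ} {x y : Fin d → ℝ} (h : x ≠ y) : 0 < l1dist x y := by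
  obtain ⟨i, hi⟩ := Function.ne_iff.mp h
  exact Finset.sum_pos' (fun _ _ => abs_nonneg _)
    ⟨i, Finset.mem_univ i, abs_pos.mpr (sub_ne_zero.mpr hi)⟩

lemma eudist_le_l1dist {d : ℕ} (x y : Fin d → ℝ) : eudist x y ≤ l1dist x y := by
  have h : ∑ i, (x i - y i) ^ 2 ≤ (∑ i, |x i - y i|) ^ 2 := by
    simpa only [sq_abs] using
      Finset.sum_sq_le_sq_sum_of_nonneg (s := Finset.univ) fun i _ => abs_nonneg (x i - y i)
  calc eudist x y ≤ Real.sqrt ((∑ i, |x i - y i|) ^ 2) := Real.sqrt_le_sqrt h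
    _ = l1dist x y := Real.sqrt_sq (l1dist_nonneg x y)

lemma l1dist_le_sqrt_mul_eudist {d : ℕ} (x y : Fin d → ℝ) :
    l1dist x y ≤ Real.sqrt d * eudist x y := by
  have h : (∑ i, |x i - y i|) ^ 2 ≤ (d : ℝ) * ∑ i, (x i - y i) ^ 2 := by
    simpa only [sq_abs, Finset.card_univ, Fintype.card_fin, nsmul_eq_mul] using
      sq_sum_le_card_mul_sum_sq (s := Finset.univ) (f := fun i : Fin d => |x i - y i|)
  calc l1dist x y = Real.sqrt ((∑ i, |x i - y i|) ^ 2) :=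
        (Real.sqrt_sq (l1dist_nonneg x y)).symm
    _ ≤ Real.sqrt ((d : ℝ) * ∑ i, (x i - y i) ^ 2) := Real.sqrt_le_sqrt h
    _ = Real.sqrt d * eudist x y := Real.sqrt_mul (Nat.cast_nonneg d) _

lemma sqrt_natCast_le_rpow_three_halves (d : ℕ) : Real.sqrt d ≤ (d : ℝ) ^ ((3 : ℝ) / 2) := by
  rcases Nat.eq_zero_or_pos d with rfl | hd
  · simp
  · rw [Real.sqrt_eq_rpow]
    exact Real.rpow_le_rpow_of_exponent_le (Nat.one_le_cast.mpr hd) (by norm_num)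

lemma l1dist_sum_smul_le {ι : Type*} [Fintype ι] {d : ℕ} {w w' : ι → ℝ}
    (v : ι → Fin d → ℝ) (v₀ : Fin d → ℝ) {M : ℝ} (hsum : ∑ j, w j = ∑ j, w' j)
    (hv : ∀ j, l1dist (v j) v₀ ≤ M) :
    l1dist (∑ j, w j • v j) (∑ j, w' j • v j) ≤ (∑ j, |w j - w' j|) * M := by
  have hcoord : ∀ i, (∑ j, w j • v j) i - (∑ j, w' j • v j) i
      = ∑ j, (w j - w' j) * (v j i - v₀ i) := by
    intro i
    simp only [Finset.sum_apply, Pi.smul_apply, smul_eq_mul, sub_mul, mul_sub,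
      Finset.sum_sub_distrib, ← Finset.sum_mul, hsum]
    ring
  calc l1dist (∑ j, w j • v j) (∑ j, w' j • v j)
      ≤ ∑ i, ∑ j, |w j - w' j| * |v j i - v₀ i| := by
        refine Finset.sum_le_sum fun i _ => ?_
        rw [hcoord i]
        exact (Finset.abs_sum_le_sum_abs _ _).trans_eq (by simp only [abs_mul])
    _ = ∑ j, |w j - w' j| * l1dist (v j) v₀ := by
        rw [Finset.sum_comm]
        simp only [l1dist, Finset.mul_sum]
    _ ≤ ∑ j, |w j - w' j| * M :=
        Finset.sum_le_sum fun j _ => mul_le_mul_of_nonneg_left (hv j) (abs_nonneg _)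
    _ = (∑ j, |w j - w' j|) * M := (Finset.sum_mul _ _ _).symm

section Softmax

variable {ι : Type*} [Fintype ι] [Nonempty ι] {G G' : ι → ℝ}

lemma sum_div_sum_eq_one (hG : ∀ j, 0 < G j) : ∑ j, G j / ∑ p, G p = 1 := by
  rw [← Finset.sum_div]
  exact div_self (Finset.sum_pos (fun j _ => hG j) Finset.univ_nonempty).ne'

lemma sum_abs_div_sum_sub_div_sum_le (hG : ∀ j, 0 < G j) (hG' : ∀ j, 0 < G' j) :
    ∑ j, |G j / ∑ p, G p - G' j / ∑ p, G' p| ≤ 2 * (∑ j, |G j - G' j|) / ∑ p, G p := by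
  set S := ∑ p, G p
  set S' := ∑ p, G' p
  set T := ∑ j, |G j - G' j|
  have hS : 0 < S := Finset.sum_pos (fun j _ => hG j) Finset.univ_nonempty
  have hS' : 0 < S' := Finset.sum_pos (fun j _ => hG' j) Finset.univ_nonempty
  have hST : |S' - S| ≤ T :=
    calc |S' - S| = |∑ j, (G j - G' j)| := by rw [abs_sub_comm, Finset.sum_sub_distrib]
      _ ≤ T := Finset.abs_sum_le_sum_abs _ _
  have hsplit : ∀ j, |G j / S - G' j / S'| ≤ |G j - G' j| / S + G' j / S' * (|S' - S| / S) := by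
    intro j
    have : G j / S - G' j / S' = (G j - G' j) / S + G' j / S' * ((S' - S) / S) := by
      field_simp
      ring
    rw [this]
    refine (abs_add_le _ _).trans_eq ?_
    rw [abs_div, abs_mul, abs_div, abs_div, abs_of_pos hS, abs_of_pos hS', abs_of_pos (hG' j)]
  calc ∑ j, |G j / S - G' j / S'|
      ≤ ∑ j, (|G j - G' j| / S + G' j / S' * (|S' - S| / S)) :=
        Finset.sum_le_sum fun j _ => hsplit j
    _ = T / S + |S' - S| / S := by
        rw [Finset.sum_add_distrib, ← Finset.sum_div, ← Finset.sum_mul, sum_div_sum_eq_one hG',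
          one_mul]
    _ ≤ 2 * T / S := by
        rw [← add_div, two_mul]
        gcongr

lemma sum_abs_div_sum_sub_div_sum_le_of_le {ε c : ℝ} (hε : 0 < ε) (hG : ∀ j, ε ≤ G j)
    (hG' : ∀ j, 0 < G' j) (hc : ∀ j, |G j - G' j| ≤ c) :
    ∑ j, |G j / ∑ p, G p - G' j / ∑ p, G' p| ≤ 2 * c / ε := by
  have hGpos : ∀ j, 0 < G j := fun j => hε.trans_le (hG j)
  have hS : 0 < ∑ p, G p := Finset.sum_pos (fun j _ => hGpos j) Finset.univ_nonempty
  have hc0 : 0 ≤ c := (abs_nonneg _).trans (hc (Classical.arbitrary ι))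
  have hT : ∑ j, |G j - G' j| ≤ c / ε * ∑ p, G p := by
    rw [Finset.mul_sum]
    refine Finset.sum_le_sum fun j _ => (hc j).trans ?_
    rw [div_mul_eq_mul_div, le_div_iff₀ hε]
    exact mul_le_mul_of_nonneg_left (hG j) hc0
  calc ∑ j, |G j / ∑ p, G p - G' j / ∑ p, G' p|
      ≤ 2 * (∑ j, |G j - G' j|) / ∑ p, G p := sum_abs_div_sum_sub_div_sum_le hGpos hG'
    _ ≤ 2 * c / ε := by
        rw [mul_div_assoc, mul_div_assoc]
        exact mul_le_mul_of_nonneg_left (div_le_of_le_mul₀ hS.le (by positivity) hT) zero_le_two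

end Softmax

/-- `Kl` is `‖ℓ‖_Lip`, `CG` is `‖G‖_{Lip,∞}` and `D` is the ℓ¹-diameter of `E`. -/
theorem statement9_general {d N : ℕ} (hN : 0 < N)
    (E : Set (Fin d → ℝ))
    (k : Fin N → (Fin d → ℝ)) (hk : ∀ i, k i ∈ E)
    (ℓ : (Fin d → ℝ) → (Fin d → ℝ))
    (Kl : ℝ) (hℓLip : ∀ x ∈ E, ∀ y ∈ E, l1dist (ℓ x) (ℓ y) ≤ Kl * l1dist x y)
    (a : (Fin d → ℝ) → (Fin d → ℝ) → ℝ)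
    (ε : ℝ) (hε : 0 < ε) (hGlb : ∀ x ∈ E, ∀ y ∈ E, ε ≤ Real.exp (a x y))
    (CG : ℝ)
    (hGLip : ∀ y ∈ E, ∀ x ∈ E, ∀ x' ∈ E,
      |Real.exp (a x y) - Real.exp (a x' y)| ≤ CG * l1dist x x')
    (D : ℝ) (hD : ∀ x ∈ E, ∀ y ∈ E, l1dist x y ≤ D)
    (Att : (Fin d → ℝ) → (Fin d → ℝ))
    (hAtt : ∀ q, Att q = ∑ j, (Real.exp (a q (k j)) / ∑ p, Real.exp (a q (k p))) • ℓ (k j))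
    (q1 q2 : Fin d → ℝ) (hq1 : q1 ∈ E) (hq2 : q2 ∈ E) :
    eudist (Att q1) (Att q2)
      ≤ (d : ℝ) ^ ((3 : ℝ) / 2) * Kl * (2 * CG * D / ε) * eudist q1 q2 := by
  rcases eq_or_ne q1 q2 with rfl | hne
  · simp [eudist]
  have : Nonempty (Fin N) := ⟨⟨0, hN⟩⟩
  set L := l1dist q1 q2
  have hL : 0 < L := l1dist_pos_of_ne hne
  have hKl : 0 ≤ Kl :=
    nonneg_of_mul_nonneg_left ((l1dist_nonneg _ _).trans (hℓLip q1 hq1 q2 hq2)) hL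
  have hCG : 0 ≤ CG :=
    nonneg_of_mul_nonneg_left ((abs_nonneg _).trans (hGLip q1 hq1 q1 hq1 q2 hq2)) hL
  have hD0 : 0 ≤ D := (l1dist_self q1).symm.le.trans (hD q1 hq1 q1 hq1)
  have hweights := sum_abs_div_sum_sub_div_sum_le_of_le hε (fun j => hGlb q1 hq1 (k j) (hk j))
    (fun j => Real.exp_pos (a q2 (k j))) (fun j => hGLip (k j) (hk j) q1 hq1 q2 hq2)
  have hvalues : ∀ j, l1dist (ℓ (k j)) (ℓ q1) ≤ Kl * D := fun j =>
    (hℓLip _ (hk j) _ hq1).trans (mul_le_mul_of_nonneg_left (hD _ (hk j) _ hq1) hKl)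
  have hAttL1 : l1dist (Att q1) (Att q2) ≤ 2 * (CG * L) / ε * (Kl * D) := by
    rw [hAtt, hAtt]
    refine (l1dist_sum_smul_le _ (ℓ q1) ?_ hvalues).trans ?_
    · rw [sum_div_sum_eq_one fun _ => Real.exp_pos _, sum_div_sum_eq_one fun _ => Real.exp_pos _]
    · exact mul_le_mul_of_nonneg_right hweights (mul_nonneg hKl hD0)
  calc eudist (Att q1) (Att q2) ≤ l1dist (Att q1) (Att q2) := eudist_le_l1dist _ _
    _ ≤ 2 * (CG * L) / ε * (Kl * D) := hAttL1
    _ = Kl * (2 * CG * D / ε) * L := by ring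
    _ ≤ Kl * (2 * CG * D / ε) * (Real.sqrt d * eudist q1 q2) := by
        gcongr
        exact l1dist_le_sqrt_mul_eudist q1 q2
    _ = Real.sqrt d * Kl * (2 * CG * D / ε) * eudist q1 q2 := by ring
    _ ≤ (d : ℝ) ^ ((3 : ℝ) / 2) * Kl * (2 * CG * D / ε) * eudist q1 q2 := by
        gcongr
        · exact Real.sqrt_nonneg _
        · exact sqrt_natCast_le_rpow_three_halves d

/-- the attention map `q ↦ Attention(q,K,V)` with values `v_j = ℓ(k_j)` and
potential `G(x,y) = exp(a(x,y))` is Lipschitz for the Euclidean distance with constant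
`d^{3/2} · ‖ℓ‖_Lip · 2‖G‖_{Lip,∞} diam(E) / ε(G)`.
Here `Kl` is the constant `‖ℓ‖_Lip`, `CG` the constant `‖G‖_{Lip,∞}`, and `D` the
ℓ¹-diameter of `E`. -/
theorem statement9 {d N : ℕ} (hN : 0 < N)
    (E : Set (Fin d → ℝ)) (hEc : IsCompact E) (hEconv : Convex ℝ E)
    (k : Fin N → (Fin d → ℝ)) (hk : ∀ i, k i ∈ E)
    (ℓ : (Fin d → ℝ) → (Fin d → ℝ)) (hℓE : Set.MapsTo ℓ E E)
    (Kl : ℝ) (hℓLip : ∀ x ∈ E, ∀ y ∈ E, l1dist (ℓ x) (ℓ y) ≤ Kl * l1dist x y)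
    (a : (Fin d → ℝ) → (Fin d → ℝ) → ℝ)
    (ε : ℝ) (hε : 0 < ε) (hGlb : ∀ x ∈ E, ∀ y ∈ E, ε ≤ Real.exp (a x y))
    (CG : ℝ)
    (hGLip : ∀ y ∈ E, ∀ x ∈ E, ∀ x' ∈ E,
      |Real.exp (a x y) - Real.exp (a x' y)| ≤ CG * l1dist x x')
    (D : ℝ) (hD : ∀ x ∈ E, ∀ y ∈ E, l1dist x y ≤ D)
    (Att : (Fin d → ℝ) → (Fin d → ℝ))
    (hAtt : ∀ q, Att q = ∑ j, (Real.exp (a q (k j)) / ∑ p, Real.exp (a q (k p))) • ℓ (k j))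
    (q1 q2 : Fin d → ℝ) (hq1 : q1 ∈ E) (hq2 : q2 ∈ E) :
    eudist (Att q1) (Att q2)
      ≤ (d : ℝ) ^ ((3 : ℝ) / 2) * Kl * (2 * CG * D / ε) * eudist q1 q2 :=
  statement9_general hN E k hk ℓ Kl hℓLip a ε hε hGlb CG hGLip D hD Att hAtt q1 q2 hq1 hq2
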